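/- arXiv:2508.16338 — 10 statements merged into one kernel-verified Lean document; each statement's English description precedes it below -/
import Mathlib

section
/- For every finite simple graph G, ι(G) ≤ s(G), where s(G) is the saturation number of G, i.e., the minimum cardinality of a maximal matching in G. -/
/-- The closed neighborhood `N[A]` of a set of vertices. -/
def closedNbhd {V : Type*} (G : SimpleGraph V) (A : Set V) : Set V :=
  {v | v ∈ A ∨ ∃ a ∈ A, G.Adj a v}

/-- A set of vertices is independent if it contains no edge. -/
def IndepSet {V : Type*} (G : SimpleGraph V) (S : Set V) : Prop :=
  ∀ u ∈ S, ∀ v ∈ S, ¬ G.Adj u v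

/-- `A` is isolating if the vertices outside `N[A]` form an independent set. -/
def IsIsolating {V : Type*} (G : SimpleGraph V) (A : Set V) : Prop :=
  IndepSet G (closedNbhd G A)ᶜ

/-- The isolation number `ι(G)`. -/
noncomputable def isolationNum {V : Type*} (G : SimpleGraph V) : ℕ :=
  sInf {n | ∃ A : Set V, IsIsolating G A ∧ A.ncard = n}

/-- `D` is a dominating set if `N[D] = V(G)`. -/
def IsDominating {V : Type*} (G : SimpleGraph V) (D : Set V) : Prop :=
  closedNbhd G D = Set.univ

/-- The domination number `γ(G)`. -/
noncomputable def dominationNum {V : Type*} (G : SimpleGraph V) : ℕ :=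
  sInf {n | ∃ D : Set V, IsDominating G D ∧ D.ncard = n}
/-- A matching: a set of edges of `G`, pairwise sharing no endpoint. -/
def IsMatchingSet {V : Type*} (G : SimpleGraph V) (M : Set (Sym2 V)) : Prop :=
  M ⊆ G.edgeSet ∧ M.Pairwise fun e f => ∀ v : V, v ∈ e → v ∉ f

/-- A maximal matching: no edge of `G` can be added to it. -/
def IsMaximalMatching {V : Type*} (G : SimpleGraph V) (M : Set (Sym2 V)) : Prop :=
  IsMatchingSet G M ∧ ∀ e ∈ G.edgeSet, e ∉ M → ¬ IsMatchingSet G (insert e M)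

/-- The saturation number `s(G)`: minimum size of a maximal matching. -/
noncomputable def saturationNum {V : Type*} (G : SimpleGraph V) : ℕ :=
  sInf {n | ∃ M : Set (Sym2 V), IsMaximalMatching G M ∧ M.ncard = n}

/-!
Take a maximal matching `M` and let `A` contain one endpoint of each edge of `M`. Then `N[A]`
contains every vertex covered by `M`, and by maximality the uncovered vertices are independent,
so `A` is an isolating set with at most `|M|` elements.
-/

lemma exists_isMaximalMatching {V : Type*} [Finite V] (G : SimpleGraph V) :
    ∃ M, IsMaximalMatching G M := by
  obtain ⟨M, hM, hmax⟩ := Set.Finite.exists_maximalFor id {M | IsMatchingSet G M}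
    (Set.toFinite _) ⟨∅, by simp [IsMatchingSet]⟩
  exact ⟨M, hM, fun e _ heM hins =>
    heM (hmax hins (Set.subset_insert e M) (Set.mem_insert e M))⟩

section

variable {V : Type*} {G : SimpleGraph V}

lemma IsMatchingSet.insert {M : Set (Sym2 V)} {e : Sym2 V} (hM : IsMatchingSet G M)
    (he : e ∈ G.edgeSet) (hdisj : ∀ f ∈ M, ∀ v ∈ e, v ∉ f) :
    IsMatchingSet G (insert e M) := by
  have : Std.Symm fun e f : Sym2 V => ∀ v : V, v ∈ e → v ∉ f :=
    ⟨fun _ _ h v hf he => h v he hf⟩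
  exact ⟨Set.insert_subset he hM.1,
    Set.pairwise_insert_of_symm.2 ⟨hM.2, fun f hf _ => hdisj f hf⟩⟩

lemma IsMaximalMatching.exists_mem_of_adj {M : Set (Sym2 V)} (hM : IsMaximalMatching G M)
    {u v : V} (huv : G.Adj u v) : ∃ f ∈ M, u ∈ f ∨ v ∈ f := by
  by_contra! h
  by_cases hmem : s(u, v) ∈ M
  · exact (h _ hmem).1 (Sym2.mem_mk_left u v)
  refine hM.2 _ huv hmem (hM.1.insert huv fun f hf w hw => ?_)
  rcases Sym2.mem_iff.1 hw with rfl | rfl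
  exacts [(h f hf).1, (h f hf).2]

lemma mem_closedNbhd_of_mem_edge {A : Set V} {e : Sym2 V} (he : e ∈ G.edgeSet) {a : V}
    (ha : a ∈ A) (hae : a ∈ e) {w : V} (hw : w ∈ e) : w ∈ closedNbhd G A := by
  rw [← Sym2.other_spec hae] at he hw
  rcases Sym2.mem_iff.1 hw with rfl | rfl
  · exact Or.inl ha
  · exact Or.inr ⟨_, ha, he⟩

lemma isIsolating_of_forall_adj {A : Set V}
    (h : ∀ u v, G.Adj u v → u ∈ closedNbhd G A ∨ v ∈ closedNbhd G A) : IsIsolating G A :=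
  fun u hu v hv huv => (h u v huv).elim hu hv

lemma IsMaximalMatching.isIsolating_image {M : Set (Sym2 V)} (hM : IsMaximalMatching G M)
    {pick : Sym2 V → V} (hpick : ∀ e, pick e ∈ e) : IsIsolating G (pick '' M) := by
  refine isIsolating_of_forall_adj fun u v huv => ?_
  obtain ⟨f, hf, hmem⟩ := hM.exists_mem_of_adj huv
  have hcover : ∀ w ∈ f, w ∈ closedNbhd G (pick '' M) := fun _ hw =>
    mem_closedNbhd_of_mem_edge (hM.1.1 hf) (Set.mem_image_of_mem pick hf) (hpick f) hw
  exact hmem.imp (hcover u) (hcover v)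

lemma isolationNum_le_ncard_of_isMaximalMatching {M : Set (Sym2 V)}
    (hM : IsMaximalMatching G M) (hfin : M.Finite) : isolationNum G ≤ M.ncard :=
  calc isolationNum G ≤ ((fun e : Sym2 V => e.out.1) '' M).ncard :=
        Nat.sInf_le ⟨_, hM.isIsolating_image Sym2.out_fst_mem, rfl⟩
    _ ≤ M.ncard := Set.ncard_image_le hfin

end

/-- For every finite simple graph `G`, `ι(G) ≤ s(G)`. -/
theorem isolation_le_saturation {V : Type*} [Fintype V] (G : SimpleGraph V) :
    isolationNum G ≤ saturationNum G := by
  obtain ⟨M, hM⟩ := exists_isMaximalMatching G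
  obtain ⟨M₀, hM₀, hcard⟩ :=
    Nat.sInf_mem (s := {n | ∃ M, IsMaximalMatching G M ∧ M.ncard = n}) ⟨M.ncard, M, hM, rfl⟩
  exact (isolationNum_le_ncard_of_isMaximalMatching hM₀ M₀.toFinite).trans_eq hcard
end

section
/- For all finite simple graphs G and H, ι(G □ H) ≤ min{α(G)·ι(H) + β(G)·γ(H), α(H)·ι(G) + β(H)·γ(G)}, where □ denotes the Cartesian product. -/
/-- The independence number `α(G)`. -/
noncomputable def indepNum {V : Type*} (G : SimpleGraph V) : ℕ :=
  sSup {n | ∃ S : Set V, IndepSet G S ∧ S.ncard = n}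

/-- A vertex cover: a set of vertices meeting every edge. -/
def IsVertexCover {V : Type*} (G : SimpleGraph V) (B : Set V) : Prop :=
  ∀ u v, G.Adj u v → u ∈ B ∨ v ∈ B

/-- The vertex cover number `β(G)`. -/
noncomputable def vertexCoverNum {V : Type*} (G : SimpleGraph V) : ℕ :=
  sInf {n | ∃ B : Set V, IsVertexCover G B ∧ B.ncard = n}

section Aux

variable {V W : Type*}

lemma ncard_prod' (s : Set V) (t : Set W) : (s ×ˢ t).ncard = s.ncard * t.ncard := by
  rw [← Nat.card_coe_set_eq, ← Nat.card_coe_set_eq, ← Nat.card_coe_set_eq,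
    Nat.card_congr (Equiv.Set.prod s t), Nat.card_prod]

lemma univ_isolating (G : SimpleGraph V) : IsIsolating G (Set.univ : Set V) := by
  intro u hu
  exact absurd (Or.inl trivial) hu

lemma isolationNum_mem (G : SimpleGraph V) :
    ∃ A : Set V, IsIsolating G A ∧ A.ncard = isolationNum G := by
  have : isolationNum G ∈ {n | ∃ A : Set V, IsIsolating G A ∧ A.ncard = n} :=
    Nat.sInf_mem ⟨_, Set.univ, univ_isolating G, rfl⟩
  exact this

lemma dominationNum_mem (G : SimpleGraph V) :
    ∃ D : Set V, IsDominating G D ∧ D.ncard = dominationNum G := by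
  have : dominationNum G ∈ {n | ∃ D : Set V, IsDominating G D ∧ D.ncard = n} :=
    Nat.sInf_mem ⟨_, Set.univ, Set.eq_univ_of_forall fun v => Or.inl trivial, rfl⟩
  exact this

lemma vertexCoverNum_mem (G : SimpleGraph V) :
    ∃ B : Set V, IsVertexCover G B ∧ B.ncard = vertexCoverNum G := by
  have : vertexCoverNum G ∈ {n | ∃ B : Set V, IsVertexCover G B ∧ B.ncard = n} :=
    Nat.sInf_mem ⟨_, Set.univ, fun u v _ => Or.inl trivial, rfl⟩
  exact this

lemma indep_ncard_le [Fintype V] (G : SimpleGraph V) {S : Set V} (hS : IndepSet G S) :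
    S.ncard ≤ indepNum G := by
  apply le_csSup
  · refine ⟨Fintype.card V, ?_⟩
    rintro n ⟨T, -, rfl⟩
    simpa [Set.ncard_univ] using Set.ncard_le_ncard (Set.subset_univ T)
  · exact ⟨S, hS, rfl⟩

lemma isolationNum_le_of_iso {G : SimpleGraph V} {H : SimpleGraph W} (e : G ≃g H) :
    isolationNum G ≤ isolationNum H := by
  obtain ⟨A, hA, hcard⟩ := isolationNum_mem H
  have hmem : ∀ x : V, e x ∈ closedNbhd H A → x ∈ closedNbhd G (e.symm '' A) := by
    rintro x (hx | ⟨a, ha, hadj⟩)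
    · exact Or.inl ⟨e x, hx, e.left_inv x⟩
    · refine Or.inr ⟨e.symm a, ⟨a, ha, rfl⟩, ?_⟩
      have := e.symm.map_adj_iff.mpr hadj
      simpa using this
  have hiso : IsIsolating G (e.symm '' A) := by
    intro u hu v hv hadj
    exact hA (e u) (fun h => hu (hmem u h)) (e v) (fun h => hv (hmem v h))
      (e.map_adj_iff.mpr hadj)
  have : isolationNum G ≤ (e.symm '' A).ncard :=
    Nat.sInf_le ⟨e.symm '' A, hiso, rfl⟩
  rwa [Set.ncard_image_of_injective _ (EquivLike.injective e.symm), hcard] at this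

lemma key [Fintype V] [Fintype W] (G : SimpleGraph V) (H : SimpleGraph W) :
    isolationNum (G.boxProd H) ≤
      indepNum G * isolationNum H + vertexCoverNum G * dominationNum H := by
  obtain ⟨B, hB, hBcard⟩ := vertexCoverNum_mem G
  obtain ⟨I, hI, hIcard⟩ := isolationNum_mem H
  obtain ⟨D, hD, hDcard⟩ := dominationNum_mem H
  set A : Set (V × W) := (Bᶜ ×ˢ I) ∪ (B ×ˢ D) with hAdef
  -- every (g, h) with g ∈ B is in the closed neighborhood of A
  have claim1 : ∀ g ∈ B, ∀ h : W, (g, h) ∈ closedNbhd (G.boxProd H) A := by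
    intro g hg h
    have hh : h ∈ closedNbhd H D := hD ▸ Set.mem_univ h
    rcases hh with hh | ⟨d, hd, hadj⟩
    · exact Or.inl (Or.inr ⟨hg, hh⟩)
    · exact Or.inr ⟨(g, d), Or.inr ⟨hg, hd⟩, Or.inr ⟨hadj, rfl⟩⟩
  have claim2 : ∀ g ∉ B, ∀ h ∈ closedNbhd H I, (g, h) ∈ closedNbhd (G.boxProd H) A := by
    intro g hg h hh
    rcases hh with hh | ⟨i, hi, hadj⟩
    · exact Or.inl (Or.inl ⟨hg, hh⟩)
    · exact Or.inr ⟨(g, i), Or.inl ⟨hg, hi⟩, Or.inr ⟨hadj, rfl⟩⟩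
  have hAiso : IsIsolating (G.boxProd H) A := by
    rintro ⟨g, h⟩ hgh ⟨g', h'⟩ hgh' hadj
    have hgB : g ∉ B := fun hgB => hgh (claim1 g hgB h)
    have hg'B : g' ∉ B := fun hgB => hgh' (claim1 g' hgB h')
    rcases hadj with ⟨hGg, (rfl : h = h')⟩ | ⟨hHh, (rfl : g = g')⟩
    · rcases hB g g' hGg with h1 | h1
      · exact hgB h1
      · exact hg'B h1
    · have h1 : h ∉ closedNbhd H I := fun hc => hgh (claim2 g hgB h hc)
      have h2 : h' ∉ closedNbhd H I := fun hc => hgh' (claim2 g hg'B h' hc)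
      exact hI h h1 h' h2 hHh
  have hle : isolationNum (G.boxProd H) ≤ A.ncard := Nat.sInf_le ⟨A, hAiso, rfl⟩
  have hBc : IndepSet G Bᶜ := fun u hu v hv hadj => by
    rcases hB u v hadj with h1 | h1
    exacts [hu h1, hv h1]
  calc isolationNum (G.boxProd H) ≤ A.ncard := hle
    _ ≤ (Bᶜ ×ˢ I).ncard + (B ×ˢ D).ncard := Set.ncard_union_le _ _
    _ = Bᶜ.ncard * I.ncard + B.ncard * D.ncard := by rw [ncard_prod', ncard_prod']
    _ ≤ indepNum G * isolationNum H + vertexCoverNum G * dominationNum H := by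
        rw [hIcard, hBcard, hDcard]
        exact Nat.add_le_add_right
          (Nat.mul_le_mul_right _ (indep_ncard_le G hBc)) _

end Aux

/-- `ι(G □ H) ≤ min{α(G)ι(H) + β(G)γ(H), α(H)ι(G) + β(H)γ(G)}`. -/
theorem isolation_boxProd_le_min
    {V W : Type*} [Fintype V] [Fintype W] (G : SimpleGraph V) (H : SimpleGraph W) :
    isolationNum (G.boxProd H) ≤
      min (indepNum G * isolationNum H + vertexCoverNum G * dominationNum H)
        (indepNum H * isolationNum G + vertexCoverNum H * dominationNum G) := by
  refine le_min (key G H) ?_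
  exact (isolationNum_le_of_iso (SimpleGraph.boxProdComm G H)).trans (key H G)
end

section
/- If G and H are finite simple graphs such that G admits a proper coloring with ω(I(H)) colors, where I(H) is the isolation graph of H and ω denotes the clique number, then ι(G □ H) ≤ n(G)·ι(H), where n(G) is the order of G. -/
/-- The set of vertices outside `N[A]`. -/
def leftoverSet {V : Type*} (G : SimpleGraph V) (A : Set V) : Set V :=
  (closedNbhd G A)ᶜ

/-- The vertices of the isolation graph: the `ι(G)`-sets. -/
def IotaSets (V : Type*) (G : SimpleGraph V) : Type _ :=
  {A : Set V // IsIsolating G A ∧ A.ncard = isolationNum G}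

/-- The isolation graph `I(G)`: vertices are the `ι(G)`-sets, two distinct such sets
`A`, `B` being adjacent whenever `L_A ∩ L_B = ∅`. -/
def isolationGraph {V : Type*} (G : SimpleGraph V) : SimpleGraph (IotaSets V G) where
  Adj A B := A ≠ B ∧ leftoverSet G A.1 ∩ leftoverSet G B.1 = ∅
  symm := ⟨fun A B h => ⟨h.1.symm, by rw [Set.inter_comm]; exact h.2⟩⟩
  loopless := ⟨fun A h => h.1 rfl⟩

/-- The clique number `ω(G)`. -/
noncomputable def cliqueNumber {W : Type*} (G : SimpleGraph W) : ℕ :=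
  sSup {n | ∃ S : Set W, (∀ u ∈ S, ∀ v ∈ S, u ≠ v → G.Adj u v) ∧ S.ncard = n}

/-- `α_k(G)`: the maximum number of vertices inducing a `k`-colorable subgraph of `G`. -/
noncomputable def alphaK {V : Type*} (G : SimpleGraph V) (k : ℕ) : ℕ :=
  sSup {n | ∃ S : Set V,
    (∃ c : V → Fin k, ∀ u ∈ S, ∀ v ∈ S, G.Adj u v → c u ≠ c v) ∧ S.ncard = n}

/-!
Take a maximum clique of `I(H)`; composing a proper colouring of `G` with `ω(I(H))` colours with
an enumeration of it gives a homomorphism `φ : G → I(H)`. Put the `ι(H)`-set `φ g` into the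
`H`-fibre over each `g`. A vertex `(g, h)` left undominated has `h ∈ L_{φ g}`; two such vertices in
one `H`-fibre are non-adjacent because `φ g` is isolating, and in adjacent `G`-fibres they would
lie in `L_{φ g} ∩ L_{φ g'} = ∅`.
-/

section Isolation

variable {V W : Type*}

lemma isolationNum_le_ncard {G : SimpleGraph V} {A : Set V} (hA : IsIsolating G A) :
    isolationNum G ≤ A.ncard :=
  Nat.sInf_le ⟨A, hA, rfl⟩

lemma mem_leftoverSet_of_mem_leftoverSet_boxProd {G : SimpleGraph V} {H : SimpleGraph W}
    {B : V → Set W} {g : V} {h : W}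
    (hgh : (g, h) ∈ leftoverSet (G □ H) {p | p.2 ∈ B p.1}) : h ∈ leftoverSet H (B g) := by
  rintro (hB | ⟨b, hb, hbh⟩)
  · exact hgh (Or.inl hB)
  · exact hgh (Or.inr ⟨(g, b), hb, .inr ⟨hbh, rfl⟩⟩)

lemma isIsolating_boxProd_fibres {G : SimpleGraph V} {H : SimpleGraph W} {B : V → Set W}
    (hB : ∀ g, IsIsolating H (B g))
    (hdisj : ∀ g g', G.Adj g g' → leftoverSet H (B g) ∩ leftoverSet H (B g') = ∅) :
    IsIsolating (G □ H) {p | p.2 ∈ B p.1} := by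
  rintro ⟨g, h⟩ hx ⟨g', h'⟩ hy hadj
  have hx' := mem_leftoverSet_of_mem_leftoverSet_boxProd hx
  have hy' := mem_leftoverSet_of_mem_leftoverSet_boxProd hy
  rcases hadj with ⟨hG, rfl : h = h'⟩ | ⟨hH, rfl : g = g'⟩
  · exact (hdisj g g' hG ▸ ⟨hx', hy'⟩ : h ∈ (∅ : Set W))
  · exact hB g h hx' h' hy' hH

lemma ncard_boxProd_fibres [Fintype V] [Finite W] (B : V → Set W) {n : ℕ}
    (hB : ∀ g, (B g).ncard = n) :
    {p : V × W | p.2 ∈ B p.1}.ncard = Fintype.card V * n := by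
  rw [← Nat.card_coe_set_eq, Set.coe_ofPred, Nat.card_congr (Equiv.subtypeProdEquivSigmaSubtype
    fun g h => h ∈ B g), Nat.card_sigma]
  simp only [Nat.card_coe_set_eq, hB, Finset.sum_const, Finset.card_univ, smul_eq_mul]

lemma not_cliqueFree_cliqueNumber [Finite W] (G : SimpleGraph W) :
    ¬G.CliqueFree (cliqueNumber G) := by
  have hbdd : BddAbove {n | ∃ S : Set W, (∀ u ∈ S, ∀ v ∈ S, u ≠ v → G.Adj u v) ∧
      S.ncard = n} :=
    ⟨Nat.card W, by rintro _ ⟨S, -, rfl⟩; exact Set.ncard_le_card S⟩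
  obtain ⟨S, hS, hcard⟩ : cliqueNumber G ∈ _ :=
    Nat.sSup_mem ⟨0, ∅, by simp, Set.ncard_empty W⟩ hbdd
  have hclique : G.IsNClique (cliqueNumber G) S.toFinite.toFinset :=
    ⟨by rw [Set.Finite.coe_toFinset]; exact hS, by rwa [← Set.ncard_eq_toFinset_card S]⟩
  exact hclique.not_cliqueFree

theorem isolationNum_boxProd_le_of_hom [Fintype V] [Finite W] {G : SimpleGraph V}
    {H : SimpleGraph W} (φ : G →g isolationGraph H) :
    isolationNum (G □ H) ≤ Fintype.card V * isolationNum H := by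
  have hiso : IsIsolating (G □ H) {p | p.2 ∈ (φ p.1).1} :=
    isIsolating_boxProd_fibres (fun g => (φ g).2.1) fun _ _ hadj => (φ.map_adj hadj).2
  calc isolationNum (G □ H) ≤ {p : V × W | p.2 ∈ (φ p.1).1}.ncard := isolationNum_le_ncard hiso
    _ = Fintype.card V * isolationNum H := ncard_boxProd_fibres _ fun g => (φ g).2.2

end Isolation

/-- If `G` is `ω(I(H))`-colorable, then `ι(G □ H) ≤ n(G) · ι(H)`. -/
theorem isolation_boxProd_le_of_colorable
    {V W : Type*} [Fintype V] [Fintype W] (G : SimpleGraph V) (H : SimpleGraph W)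
    (hcol : G.Colorable (cliqueNumber (isolationGraph H))) :
    isolationNum (G.boxProd H) ≤ Fintype.card V * isolationNum H := by
  obtain ⟨c⟩ := hcol
  have : Finite (IotaSets W H) := Subtype.finite
  exact isolationNum_boxProd_le_of_hom
    ((SimpleGraph.topEmbeddingOfNotCliqueFree (not_cliqueFree_cliqueNumber _)).toHom.comp c)
end

section
/- For all finite simple graphs G and H, ι(G □ H) ≥ max{ρ₂(G)·ι(H), ρ₂(H)·ι(G)}, where ρ₂ denotes the 2-packing number. -/
/-- The 2-packing number `ρ₂(G)`: maximum size of a set of vertices with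
pairwise disjoint closed neighborhoods. -/
noncomputable def twoPackingNum {V : Type*} (G : SimpleGraph V) : ℕ :=
  sSup {n | ∃ S : Set V,
    (S.Pairwise fun u v => Disjoint (closedNbhd G {u}) (closedNbhd G {v})) ∧ S.ncard = n}

lemma isolating_univ {V : Type*} (G : SimpleGraph V) : IsIsolating G Set.univ := by
  intro u hu
  exact absurd (Or.inl (Set.mem_univ u)) hu

lemma isolation_set_nonempty {V : Type*} (G : SimpleGraph V) :
    {n | ∃ A : Set V, IsIsolating G A ∧ A.ncard = n}.Nonempty :=
  ⟨Set.univ.ncard, Set.univ, isolating_univ G, rfl⟩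

lemma exists_min_isolating {V : Type*} (G : SimpleGraph V) :
    ∃ A : Set V, IsIsolating G A ∧ A.ncard = isolationNum G :=
  Nat.sInf_mem (isolation_set_nonempty G)

lemma closedNbhd_image {V W : Type*} {G : SimpleGraph V} {H : SimpleGraph W}
    (e : G ≃g H) (A : Set V) :
    closedNbhd H (⇑e '' A) = ⇑e '' closedNbhd G A := by
  ext w
  obtain ⟨v, rfl⟩ := e.toEquiv.surjective w
  simp only [closedNbhd, Set.mem_image, Set.mem_setOf_eq]
  constructor
  · rintro (⟨x, hx, hex⟩ | ⟨a, ⟨x, hx, rfl⟩, hadj⟩)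
    · exact ⟨v, Or.inl (by rwa [e.toEquiv.injective hex] at hx), rfl⟩
    · exact ⟨v, Or.inr ⟨x, hx, e.map_rel_iff.mp hadj⟩, rfl⟩
  · rintro ⟨x, (hx | ⟨a, ha, hadj⟩), hex⟩
    · exact Or.inl ⟨x, hx, hex⟩
    · exact Or.inr ⟨e a, ⟨a, ha, rfl⟩, by rw [← hex]; exact e.map_rel_iff.mpr hadj⟩

lemma isolation_set_subset {V W : Type*} {G : SimpleGraph V} {H : SimpleGraph W}
    (e : G ≃g H) :
    {n | ∃ A : Set V, IsIsolating G A ∧ A.ncard = n} ⊆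
      {n | ∃ A : Set W, IsIsolating H A ∧ A.ncard = n} := by
  rintro n ⟨A, hA, hn⟩
  refine ⟨⇑e '' A, ?_, by rw [Set.ncard_image_of_injective _ e.injective]; exact hn⟩
  intro u hu v hv hadj
  rw [closedNbhd_image] at hu hv
  obtain ⟨u', rfl⟩ := e.toEquiv.surjective u
  obtain ⟨v', rfl⟩ := e.toEquiv.surjective v
  have hu' : u' ∈ (closedNbhd G A)ᶜ := fun h => hu ⟨u', h, rfl⟩
  have hv' : v' ∈ (closedNbhd G A)ᶜ := fun h => hv ⟨v', h, rfl⟩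
  exact hA u' hu' v' hv' (e.map_rel_iff.mp hadj)

lemma isolationNum_congr {V W : Type*} {G : SimpleGraph V} {H : SimpleGraph W}
    (e : G ≃g H) : isolationNum G = isolationNum H := by
  unfold isolationNum
  rw [le_antisymm (fun n hn => isolation_set_subset e.symm hn) (isolation_set_subset e)]

lemma key_le {V W : Type*} [Fintype V] [Fintype W] (G : SimpleGraph V) (H : SimpleGraph W) :
    twoPackingNum G * isolationNum H ≤ isolationNum (G.boxProd H) := by
  classical
  -- obtain a maximum 2-packing S of G
  have hPmem : twoPackingNum G ∈ {n | ∃ S : Set V,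
      (S.Pairwise fun u v => Disjoint (closedNbhd G {u}) (closedNbhd G {v})) ∧ S.ncard = n} := by
    apply Nat.sSup_mem
    · exact ⟨0, ∅, Set.pairwise_empty _, by simp⟩
    · refine ⟨Fintype.card V, fun n ⟨S, _, hn⟩ => ?_⟩
      rw [← hn]
      have h := Set.ncard_le_ncard (Set.subset_univ S) (Set.finite_univ (α := V))
      simpa [Set.ncard_univ, Nat.card_eq_fintype_card] using h
  obtain ⟨S, hSpack, hScard⟩ := hPmem
  -- obtain a minimum isolating set A of G □ H
  obtain ⟨A, hAiso, hAcard⟩ := exists_min_isolating (G.boxProd H)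
  -- the slab over s
  set slab : V → Set (V × W) := fun s => A ∩ (closedNbhd G {s} ×ˢ (Set.univ : Set W)) with hslab
  -- the projection of the slab is isolating in H
  have hBiso : ∀ s, IsIsolating H (Prod.snd '' slab s) := by
    intro s
    intro w hw w' hw' hadj
    have hnot : ∀ x : W, x ∈ (closedNbhd H (Prod.snd '' slab s))ᶜ →
        (s, x) ∈ (closedNbhd (G.boxProd H) A)ᶜ := by
      intro x hx hmem
      apply hx
      rcases hmem with hmem | ⟨⟨g, y⟩, hgy, hadj2⟩
      · exact Or.inl ⟨(s, x), ⟨hmem, Or.inl rfl, trivial⟩, rfl⟩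
      · rw [SimpleGraph.boxProd_adj] at hadj2
        rcases hadj2 with ⟨hg, hy⟩ | ⟨hy, hg⟩
        · exact Or.inl ⟨(g, y), ⟨hgy, Or.inr ⟨s, rfl, hg.symm⟩, trivial⟩, hy⟩
        · refine Or.inr ⟨y, ⟨(g, y), ⟨hgy, Or.inl hg, trivial⟩, rfl⟩, hy⟩
    exact hAiso (s, w) (hnot w hw) (s, w') (hnot w' hw')
      (SimpleGraph.boxProd_adj.mpr (Or.inr ⟨hadj, rfl⟩))
  -- so each slab has at least ι(H) elements
  have hslab_ge : ∀ s, isolationNum H ≤ (slab s).ncard := by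
    intro s
    calc isolationNum H ≤ (Prod.snd '' slab s).ncard :=
          Nat.sInf_le ⟨Prod.snd '' slab s, hBiso s, rfl⟩
      _ ≤ (slab s).ncard := Set.ncard_image_le (Set.toFinite _)
  -- count
  have hSfin : S.Finite := Set.toFinite S
  have hdisj : ∀ s ∈ hSfin.toFinset, ∀ t ∈ hSfin.toFinset, s ≠ t →
      Disjoint (slab s).toFinset (slab t).toFinset := by
    intro s hs t ht hst
    rw [Set.disjoint_toFinset]
    have := hSpack (hSfin.mem_toFinset.mp hs) (hSfin.mem_toFinset.mp ht) hst
    exact Disjoint.mono (Set.inter_subset_right.trans (Set.prod_mono_left le_rfl))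
      (Set.inter_subset_right.trans (Set.prod_mono_left le_rfl))
      (Set.disjoint_prod.mpr (Or.inl this))
  calc twoPackingNum G * isolationNum H
      = hSfin.toFinset.card * isolationNum H := by
        rw [← hScard, Set.ncard_eq_toFinset_card' S, Set.toFinite_toFinset]
    _ ≤ ∑ s ∈ hSfin.toFinset, (slab s).toFinset.card := by
        rw [← smul_eq_mul]
        exact Finset.card_nsmul_le_sum hSfin.toFinset _ _
          (fun s _ => by rw [← Set.ncard_eq_toFinset_card']; exact hslab_ge s)
    _ = (hSfin.toFinset.biUnion fun s => (slab s).toFinset).card :=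
        (Finset.card_biUnion hdisj).symm
    _ ≤ A.toFinset.card := by
        apply Finset.card_le_card
        intro x hx
        obtain ⟨s, _, hxs⟩ := Finset.mem_biUnion.mp hx
        rw [Set.mem_toFinset] at hxs ⊢
        exact hxs.1
    _ = isolationNum (G.boxProd H) := by rw [← Set.ncard_eq_toFinset_card', hAcard]

/-- `ι(G □ H) ≥ max{ρ₂(G)ι(H), ρ₂(H)ι(G)}`. -/
theorem isolation_boxProd_ge_twoPacking_mul
    {V W : Type*} [Fintype V] [Fintype W] (G : SimpleGraph V) (H : SimpleGraph W) :
    isolationNum (G.boxProd H) ≥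
      max (twoPackingNum G * isolationNum H) (twoPackingNum H * isolationNum G) := by
  rw [ge_iff_le, max_le_iff]
  refine ⟨key_le G H, ?_⟩
  rw [isolationNum_congr (SimpleGraph.boxProdComm G H)]
  exact key_le H G
end

section
/- For every finite simple graph G, γ(G) ≤ ι(G □ K₂) ≤ γ(G □ K₂), where G □ K₂ is the prism over G. -/
/-- `γ(G) ≤ ι(G □ K₂) ≤ γ(G □ K₂)`. -/
theorem domination_le_isolation_prism_le_domination_prism
    {V : Type*} [Fintype V] (G : SimpleGraph V) :
    dominationNum G ≤ isolationNum (G.boxProd (⊤ : SimpleGraph (Fin 2))) ∧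
      isolationNum (G.boxProd (⊤ : SimpleGraph (Fin 2))) ≤
        dominationNum (G.boxProd (⊤ : SimpleGraph (Fin 2))) := by
  set P := G.boxProd (⊤ : SimpleGraph (Fin 2)) with hP
  have hne : {n | ∃ A : Set (V × Fin 2), IsIsolating P A ∧ A.ncard = n}.Nonempty :=
    ⟨(Set.univ : Set (V × Fin 2)).ncard, Set.univ, fun u hu => absurd (Or.inl trivial) hu, rfl⟩
  constructor
  · obtain ⟨A, hA, hcard⟩ := Nat.sInf_mem hne
    have hdom : IsDominating G (Prod.fst '' A) := by
      ext v
      simp only [Set.mem_univ, iff_true]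
      by_contra hv
      have key : ∀ i : Fin 2, (v, i) ∈ (closedNbhd P A)ᶜ := by
        intro i hi
        rcases hi with h | ⟨a, ha, hadj⟩
        · exact hv (Or.inl ⟨(v, i), h, rfl⟩)
        · rw [hP, SimpleGraph.boxProd_adj] at hadj
          rcases hadj with ⟨hadj, _⟩ | ⟨_, heq⟩
          · exact hv (Or.inr ⟨a.1, ⟨a, ha, rfl⟩, hadj⟩)
          · exact hv (Or.inl ⟨a, ha, by rw [heq]⟩)
      refine hA (v, 0) (key 0) (v, 1) (key 1) ?_
      rw [hP, SimpleGraph.boxProd_adj]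
      exact Or.inr ⟨Fin.zero_ne_one, rfl⟩
    calc dominationNum G ≤ (Prod.fst '' A).ncard := Nat.sInf_le ⟨_, hdom, rfl⟩
      _ ≤ A.ncard := Set.ncard_image_le A.toFinite
      _ = _ := hcard
  · apply csInf_le_csInf (OrderBot.bddBelow _)
    · obtain ⟨n, D, hD, hc⟩ : {n | ∃ D : Set (V × Fin 2), IsDominating P D ∧
          D.ncard = n}.Nonempty := by
        refine ⟨(Set.univ : Set (V × Fin 2)).ncard, Set.univ, ?_, rfl⟩
        ext v
        simp only [Set.mem_univ, iff_true]
        exact Or.inl trivial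
      exact ⟨n, D, hD, hc⟩
    · rintro n ⟨D, hD, hc⟩
      refine ⟨D, ?_, hc⟩
      intro u hu
      rw [hD] at hu
      exact absurd trivial hu
end

section
/- If G and H are finite simple connected graphs each with at least two vertices and ι(H) ≥ 2, then ι(G ∘ H) = γ(G ∘ H) = γ_t(G), where ∘ denotes the lexicographic product and γ_t the total domination number. -/
/-- A total dominating set: every vertex has a neighbor in `D`. -/
def IsTotalDominating {V : Type*} (G : SimpleGraph V) (D : Set V) : Prop :=
  ∀ v : V, ∃ d ∈ D, G.Adj v d

/-- The total domination number `γ_t(G)`. -/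
noncomputable def totalDomNum {V : Type*} (G : SimpleGraph V) : ℕ :=
  sInf {n | ∃ D : Set V, IsTotalDominating G D ∧ D.ncard = n}

/-- The lexicographic product `G ∘ H`. -/
def lexProd {α β : Type*} (G : SimpleGraph α) (H : SimpleGraph β) : SimpleGraph (α × β) where
  Adj x y := G.Adj x.1 y.1 ∨ (x.1 = y.1 ∧ H.Adj x.2 y.2)
  symm := by
    constructor
    rintro ⟨a, b⟩ ⟨c, d⟩ (h | ⟨rfl, h⟩)
    · exact Or.inl h.symm
    · exact Or.inr ⟨rfl, h.symm⟩
  loopless := by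
    constructor
    rintro ⟨a, b⟩ (h | ⟨-, h⟩)
    · exact G.irrefl h
    · exact H.irrefl h

/-!
A total dominating set `D` of `G` yields the dominating set `D × {h₀}` of `G ∘ H`, and every
dominating set is isolating. Conversely, let `A` isolate `G ∘ H`. If no neighbour of `g` lies
below `A`, the fibre of `A` over `g` isolates `H`, so it has at least `ι(H) ≥ 2` elements. Moving
one of them to a neighbour of `g` turns the projection of `A` into a total dominating set of `G`
with at most `|A|` vertices.
-/

section

variable {V W : Type*} {G : SimpleGraph V} {H : SimpleGraph W}

theorem isolationNum_le {A : Set V} (hA : IsIsolating G A) : isolationNum G ≤ A.ncard :=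
  Nat.sInf_le ⟨A, hA, rfl⟩

theorem dominationNum_le {D : Set V} (hD : IsDominating G D) : dominationNum G ≤ D.ncard :=
  Nat.sInf_le ⟨D, hD, rfl⟩

theorem totalDomNum_le {D : Set V} (hD : IsTotalDominating G D) : totalDomNum G ≤ D.ncard :=
  Nat.sInf_le ⟨D, hD, rfl⟩

theorem isDominating_univ : IsDominating G Set.univ :=
  Set.eq_univ_of_forall fun _ => Or.inl trivial

theorem IsDominating.isIsolating {D : Set V} (hD : IsDominating G D) : IsIsolating G D := by
  intro u hu
  rw [hD] at hu
  exact absurd trivial hu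

theorem exists_isDominating_ncard_eq : ∃ D, IsDominating G D ∧ D.ncard = dominationNum G :=
  Nat.sInf_mem (s := {n | ∃ D : Set V, IsDominating G D ∧ D.ncard = n})
    ⟨_, Set.univ, isDominating_univ, rfl⟩

theorem exists_isTotalDominating_ncard_eq (hG : ∀ v, ∃ u, G.Adj v u) :
    ∃ D, IsTotalDominating G D ∧ D.ncard = totalDomNum G :=
  Nat.sInf_mem (s := {n | ∃ D : Set V, IsTotalDominating G D ∧ D.ncard = n})
    ⟨_, Set.univ, fun v => (hG v).imp fun _ hu => ⟨trivial, hu⟩, rfl⟩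

theorem exists_isIsolating_ncard_eq : ∃ A, IsIsolating G A ∧ A.ncard = isolationNum G :=
  Nat.sInf_mem (s := {n | ∃ A : Set V, IsIsolating G A ∧ A.ncard = n})
    ⟨_, Set.univ, isDominating_univ.isIsolating, rfl⟩

theorem isolationNum_le_dominationNum : isolationNum G ≤ dominationNum G := by
  obtain ⟨D, hD, hDcard⟩ := exists_isDominating_ncard_eq (G := G)
  exact hDcard ▸ isolationNum_le hD.isIsolating

theorem IsTotalDominating.isDominating_lexProd {D : Set V} (hD : IsTotalDominating G D) (h₀ : W) :
    IsDominating (lexProd G H) ((·, h₀) '' D) := by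
  refine Set.eq_univ_of_forall fun x => Or.inr ?_
  obtain ⟨d, hd, hadj⟩ := hD x.1
  exact ⟨(d, h₀), Set.mem_image_of_mem _ hd, Or.inl hadj.symm⟩

theorem dominationNum_lexProd_le_totalDomNum [Nonempty W] (hG : ∀ v, ∃ u, G.Adj v u) :
    dominationNum (lexProd G H) ≤ totalDomNum G := by
  obtain ⟨D, hD, hDcard⟩ := exists_isTotalDominating_ncard_eq hG
  obtain ⟨h₀⟩ := ‹Nonempty W›
  calc dominationNum (lexProd G H) ≤ ((·, h₀) '' D).ncard :=
        dominationNum_le (hD.isDominating_lexProd h₀)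
    _ = totalDomNum G := by
      rw [Set.ncard_image_of_injective D (Prod.mk_left_injective h₀), hDcard]

/-- When no neighbour of `g` lies below `A`, the copy of `H` over `g` is dominated by `A` only
from inside that copy. -/
theorem IsIsolating.fiber_lexProd {A : Set (V × W)} (hA : IsIsolating (lexProd G H) A) {g : V}
    (hg : ∀ a ∈ A, ¬ G.Adj g a.1) : IsIsolating H {h | (g, h) ∈ A} := by
  have hout : ∀ h, h ∉ closedNbhd H {h | (g, h) ∈ A} → (g, h) ∉ closedNbhd (lexProd G H) A := by
    rintro h hh (hA' | ⟨⟨a₁, a₂⟩, ha, hGa | ⟨rfl, hHa⟩⟩)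
    · exact hh (Or.inl hA')
    · exact hg _ ha hGa.symm
    · exact hh (Or.inr ⟨a₂, ha, hHa⟩)
  intro h₁ hh₁ h₂ hh₂ hadj
  exact hA _ (hout h₁ hh₁) _ (hout h₂ hh₂) (Or.inr ⟨rfl, hadj⟩)

theorem IsIsolating.exists_isTotalDominating_ncard_le {A : Set (V × W)}
    (hA : IsIsolating (lexProd G H) A) (hAfin : A.Finite) (hG : ∀ v, ∃ u, G.Adj v u)
    (hH : 2 ≤ isolationNum H) : ∃ D, IsTotalDominating G D ∧ D.ncard ≤ A.ncard := by
  classical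
  set U := {g | ∀ a ∈ A, ¬ G.Adj g a.1}
  have hfiber : ∀ g ∈ U, 1 < {h | (g, h) ∈ A}.ncard := fun g hg =>
    hH.trans (isolationNum_le (hA.fiber_lexProd hg))
  have hs : ∀ g, ∃ h, g ∈ U → (g, h) ∈ A := by
    intro g
    by_cases hg : g ∈ U
    · obtain ⟨h, hh⟩ := Set.nonempty_of_ncard_ne_zero (hfiber g hg).ne_bot
      exact ⟨h, fun _ => hh⟩
    · obtain ⟨a, -, -⟩ : ∃ a ∈ A, G.Adj g a.1 := by simpa [U] using hg
      exact ⟨a.2, fun hg' => absurd hg' hg⟩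
  choose s hs using hs
  choose f hf using hG
  -- A vertex `g ∈ U` has at least two vertices of `A` over it: `(g, s g)` is charged to the
  -- neighbour `f g`, and any other one to `g` itself.
  let ψ : V × W → V := fun x => if x.1 ∈ U ∧ x.2 = s x.1 then f x.1 else x.1
  have hproj : ∀ a ∈ A, a.1 ∈ ψ '' A := by
    rintro ⟨g, h⟩ ha
    by_cases hg : g ∈ U
    · obtain ⟨h', hh', hne⟩ := Set.exists_ne_of_one_lt_ncard (hfiber g hg) (s g)
      exact ⟨(g, h'), hh', by simp [ψ, hne]⟩
    · exact ⟨(g, h), ha, by simp [ψ, hg]⟩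
  refine ⟨ψ '' A, fun v => ?_, Set.ncard_image_le hAfin⟩
  by_cases hv : v ∈ U
  · exact ⟨f v, ⟨(v, s v), hs v hv, by simp [ψ, hv]⟩, hf v⟩
  · obtain ⟨a, ha, hadj⟩ : ∃ a ∈ A, G.Adj v a.1 := by simpa [U] using hv
    exact ⟨a.1, hproj a ha, hadj⟩

theorem totalDomNum_le_isolationNum_lexProd [Finite V] [Finite W] (hG : ∀ v, ∃ u, G.Adj v u)
    (hH : 2 ≤ isolationNum H) : totalDomNum G ≤ isolationNum (lexProd G H) := by
  obtain ⟨A, hA, hAcard⟩ := exists_isIsolating_ncard_eq (G := lexProd G H)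
  obtain ⟨D, hD, hDA⟩ := hA.exists_isTotalDominating_ncard_le A.toFinite hG hH
  exact hAcard ▸ (totalDomNum_le hD).trans hDA

end

theorem isolation_lexProd_eq_totalDomination_general
    {V W : Type*} [Fintype V] [Fintype W] (G : SimpleGraph V) (H : SimpleGraph W)
    (hGc : G.Connected)
    (hGn : 2 ≤ Fintype.card V) (hHn : 2 ≤ Fintype.card W)
    (hiH : 2 ≤ isolationNum H) :
    isolationNum (lexProd G H) = dominationNum (lexProd G H) ∧
      dominationNum (lexProd G H) = totalDomNum G := by
  have : Nontrivial V := Fintype.one_lt_card_iff_nontrivial.mp hGn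
  have : Nonempty W := Fintype.card_pos_iff.mp (by omega)
  have hG : ∀ v, ∃ u, G.Adj v u := hGc.preconnected.exists_adj_of_nontrivial
  have hιγ := isolationNum_le_dominationNum (G := lexProd G H)
  have hγγt := dominationNum_lexProd_le_totalDomNum (H := H) hG
  have hγtι := totalDomNum_le_isolationNum_lexProd hG hiH
  exact ⟨le_antisymm hιγ (hγγt.trans hγtι), le_antisymm hγγt (hγtι.trans hιγ)⟩

/-- If `G` and `H` are nontrivial connected graphs with `ι(H) ≥ 2`, then
`ι(G ∘ H) = γ(G ∘ H) = γ_t(G)`. -/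
theorem isolation_lexProd_eq_totalDomination
    {V W : Type*} [Fintype V] [Fintype W] (G : SimpleGraph V) (H : SimpleGraph W)
    (hGc : G.Connected) (hHc : H.Connected)
    (hGn : 2 ≤ Fintype.card V) (hHn : 2 ≤ Fintype.card W)
    (hiH : 2 ≤ isolationNum H) :
    isolationNum (lexProd G H) = dominationNum (lexProd G H) ∧
      dominationNum (lexProd G H) = totalDomNum G :=
  isolation_lexProd_eq_totalDomination_general G H hGc hGn hHn hiH
end

section
/- For all integers t ≥ 2 and n ≥ 3, ι(S_{K_n}^t) = (n−1)·n^{t−2}, where S_{K_n}^t is the t-th Sierpiński graph over the complete graph K_n. -/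
/-- The generalized Sierpiński graph `S_G^t` on words of length `t` over `V(G)`. -/
def sierpinskiGraph {V : Type*} (G : SimpleGraph V) (t : ℕ) : SimpleGraph (Fin t → V) where
  Adj u v := ∃ i : Fin t, (∀ j, j < i → u j = v j) ∧ u i ≠ v i ∧ G.Adj (u i) (v i) ∧
      ∀ j, i < j → u j = v i ∧ v j = u i
  symm := by
    constructor
    rintro u v ⟨i, h1, h2, h3, h4⟩
    exact ⟨i, fun j hj => (h1 j hj).symm, h2.symm, h3.symm,
      fun j hj => ⟨(h4 j hj).2, (h4 j hj).1⟩⟩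
  loopless := by
    constructor
    rintro u ⟨i, -, h2, -, -⟩
    exact h2 rfl

/-- The extreme vertices of `S_G^t`: the constant words. -/
def extremeVertices (V : Type*) (t : ℕ) : Set (Fin t → V) :=
  {w | ∃ x : V, w = fun _ => x}


open Finset Fintype

section Isolation

variable {V : Type*} {G : SimpleGraph V} {A : Set V}

theorem IsIsolating.mem_closedNbhd_or_mem_closedNbhd (hA : IsIsolating G A) {u v : V}
    (huv : G.Adj u v) : u ∈ closedNbhd G A ∨ v ∈ closedNbhd G A := by
  by_contra! h
  exact hA u h.1 v h.2 huv

theorem IsIsolating.exists_forall_ne_mem_closedNbhd {ι : Type*} [Nonempty ι]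
    (hA : IsIsolating G A) {f : ι → V} (hf : Pairwise fun i j => G.Adj (f i) (f j)) :
    ∃ i₀, ∀ i, i ≠ i₀ → f i ∈ closedNbhd G A := by
  by_cases h : ∃ i₀, f i₀ ∉ closedNbhd G A
  · obtain ⟨i₀, hi₀⟩ := h
    exact ⟨i₀, fun i hi => (hA.mem_closedNbhd_or_mem_closedNbhd (hf hi)).resolve_right hi₀⟩
  · push Not at h
    exact ⟨Classical.arbitrary ι, fun i _ => h i⟩

end Isolation

namespace sierpinskiGraph

variable {α : Type*} {G : SimpleGraph α}

theorem last_ne_of_adj {t : ℕ} {u v : Fin (t + 1) → α} (h : (sierpinskiGraph G (t + 1)).Adj u v) :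
    u (Fin.last t) ≠ v (Fin.last t) := by
  obtain ⟨i, -, hne, -, hsuf⟩ := h
  rcases Fin.eq_castSucc_or_eq_last i with ⟨i, rfl⟩ | rfl
  · obtain ⟨hu, hv⟩ := hsuf (Fin.last t) (Fin.castSucc_lt_last i)
    rw [hu, hv]
    exact hne.symm
  · exact hne

theorem adj_snoc {t : ℕ} (q : Fin t → α) {y y' : α} (h : G.Adj y y') :
    (sierpinskiGraph G (t + 1)).Adj (Fin.snoc q y) (Fin.snoc q y') := by
  refine ⟨Fin.last t, fun j hj => ?_, by simpa using h.ne, by simpa using h,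
    fun j hj => absurd hj (Fin.le_last j).not_gt⟩
  obtain ⟨j, rfl⟩ := Fin.exists_castSucc_eq.2 hj.ne
  simp

theorem adj_snoc_snoc_swap {k : ℕ} (p : Fin k → α) {c y : α} (h : G.Adj c y) :
    (sierpinskiGraph G (k + 2)).Adj (Fin.snoc (Fin.snoc p c) y) (Fin.snoc (Fin.snoc p y) c) := by
  refine ⟨(Fin.last k).castSucc, fun j hj => ?_, by simpa using h.ne, by simpa using h,
    fun j hj => ?_⟩
  · obtain ⟨j, rfl⟩ := Fin.exists_castSucc_eq.2 (hj.trans (Fin.castSucc_lt_last _)).ne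
    obtain ⟨j, rfl⟩ := Fin.exists_castSucc_eq.2 (Fin.castSucc_lt_castSucc_iff.1 hj).ne
    simp
  · rcases Fin.eq_castSucc_or_eq_last j with ⟨j, rfl⟩ | rfl
    · exact absurd (Fin.castSucc_lt_castSucc_iff.1 hj) (Fin.le_last j).not_gt
    · simp

theorem init_eq_or_eq_snoc_snoc_swap_of_adj {k : ℕ} {p : Fin k → α} {c y : α} (hcy : c ≠ y)
    {u : Fin (k + 2) → α} (h : (sierpinskiGraph G (k + 2)).Adj u (Fin.snoc (Fin.snoc p c) y)) :
    Fin.init u = Fin.snoc p c ∨ u = Fin.snoc (Fin.snoc p y) c := by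
  obtain ⟨i, hpre, -, -, hsuf⟩ := h
  rcases Fin.eq_castSucc_or_eq_last i with ⟨i, rfl⟩ | rfl
  · right
    rcases Fin.eq_castSucc_or_eq_last i with ⟨i, rfl⟩ | rfl
    · -- an edge at an earlier position would force the last two letters `c`, `y` to agree
      have hc := (hsuf (Fin.last k).castSucc (by simp)).2
      have hy := (hsuf (Fin.last (k + 1)) (Fin.castSucc_lt_last _)).2
      simp only [Fin.snoc_castSucc, Fin.snoc_last] at hc hy
      exact (hcy (hc.trans hy.symm)).elim
    · obtain ⟨hlast, hpen⟩ := hsuf (Fin.last (k + 1)) (Fin.castSucc_lt_last _)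
      simp only [Fin.snoc_castSucc, Fin.snoc_last] at hlast hpen
      rw [← Fin.snoc_init_self u, ← Fin.snoc_init_self (Fin.init u), hlast]
      congr 2
      · funext j
        simpa [Fin.init] using hpre j.castSucc.castSucc (by simp [Fin.castSucc_lt_castSucc_iff])
      · simpa [Fin.init] using hpen.symm
  · left
    funext j
    simpa [Fin.init] using hpre j.castSucc (Fin.castSucc_lt_last j)

theorem snoc_snoc_swap_mem_of_mem_closedNbhd {k : ℕ} {s : Set (Fin (k + 2) → α)}
    {p : Fin k → α} {c y : α} (hcy : c ≠ y) (hc : ∀ z, Fin.snoc (Fin.snoc p c) z ∉ s)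
    (hy : Fin.snoc (Fin.snoc p c) y ∈ closedNbhd (sierpinskiGraph G (k + 2)) s) :
    Fin.snoc (Fin.snoc p y) c ∈ s := by
  rcases hy with hmem | ⟨a, ha, hadj⟩
  · exact absurd hmem (hc y)
  · rcases init_eq_or_eq_snoc_snoc_swap_of_adj hcy hadj with hinit | rfl
    · exact (hc (a (Fin.last (k + 1))) (by rwa [← hinit, Fin.snoc_init_self])).elim
    · exact ha

end sierpinskiGraph

section CompleteGraph

variable {α : Type*} [Fintype α] [DecidableEq α] {k : ℕ}

theorem card_sub_two_le_card_filter_last {s : Finset (Fin (k + 2) → α)}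
    (hs : IsIsolating (sierpinskiGraph (⊤ : SimpleGraph α) (k + 2)) ↑s) (p : Fin k → α) {c : α}
    (hc : ∀ z, Fin.snoc (Fin.snoc p c) z ∉ s) :
    card α - 2 ≤ #{w ∈ s | Fin.init (Fin.init w) = p ∧ w (Fin.last (k + 1)) = c} := by
  have : Nonempty α := ⟨c⟩
  obtain ⟨y₀, hy₀⟩ := hs.exists_forall_ne_mem_closedNbhd
    (f := fun y => Fin.snoc (Fin.snoc p c) y) fun _ _ hyy' => sierpinskiGraph.adj_snoc _ hyy'
  have hswap : ∀ y ∈ (univ.erase c).erase y₀, Fin.snoc (Fin.snoc p y) c ∈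
      ({w ∈ s | Fin.init (Fin.init w) = p ∧ w (Fin.last (k + 1)) = c} : Finset _) := by
    intro y hy
    obtain ⟨hyy₀, hyc⟩ := by simpa using hy
    simpa using sierpinskiGraph.snoc_snoc_swap_mem_of_mem_closedNbhd (Ne.symm hyc) hc (hy₀ y hyy₀)
  have hinj : Function.Injective fun y => (Fin.snoc (Fin.snoc p y) c : Fin (k + 2) → α) :=
    fun y y' h => by simpa using h
  calc card α - 2 = #(univ.erase c) - 1 := by simp [card_erase_of_mem]; omega
    _ ≤ #((univ.erase c).erase y₀) := pred_card_le_card_erase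
    _ = #(((univ.erase c).erase y₀).image fun y => Fin.snoc (Fin.snoc p y) c) :=
        (card_image_of_injective _ hinj).symm
    _ ≤ _ := card_le_card (image_subset_iff.2 hswap)

theorem card_sub_one_le_card_filter_init_init (hα : 3 ≤ card α) {s : Finset (Fin (k + 2) → α)}
    (hs : IsIsolating (sierpinskiGraph (⊤ : SimpleGraph α) (k + 2)) ↑s) (p : Fin k → α) :
    card α - 1 ≤ #{w ∈ s | Fin.init (Fin.init w) = p} := by
  set K := {w ∈ s | Fin.init (Fin.init w) = p}
  set I := K.image fun w => Fin.init w (Fin.last k)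
  by_cases hI : card α - 1 ≤ #I
  · exact hI.trans card_image_le
  obtain ⟨c, hc, c', hc', hcc'⟩ := one_lt_card.1 (show 1 < #Iᶜ by rw [card_compl]; omega)
  set R : α → Finset (Fin (k + 2) → α) :=
    fun c => {w ∈ s | Fin.init (Fin.init w) = p ∧ w (Fin.last (k + 1)) = c}
  have hrow : ∀ c ∉ I, card α - 2 ≤ #(R c) := fun c hc =>
    card_sub_two_le_card_filter_last hs p fun z hz =>
      hc (mem_image.2 ⟨_, mem_filter.2 ⟨hz, by simp⟩, by simp⟩)
  have hdisj : Disjoint (R c) (R c') :=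
    disjoint_filter.2 fun _ _ h h' => hcc' (h.2.symm.trans h'.2)
  have hsub : R c ∪ R c' ⊆ K :=
    union_subset (monotone_filter_right s fun _ _ h => h.1)
      (monotone_filter_right s fun _ _ h => h.1)
  calc card α - 1 ≤ (card α - 2) + (card α - 2) := by omega
    _ ≤ #(R c) + #(R c') := add_le_add (hrow c (mem_compl.1 hc)) (hrow c' (mem_compl.1 hc'))
    _ = #(R c ∪ R c') := (card_union_of_disjoint hdisj).symm
    _ ≤ #K := card_le_card hsub

omit [DecidableEq α] in
theorem card_sub_one_mul_pow_le_ncard (hα : 3 ≤ card α) {A : Set (Fin (k + 2) → α)}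
    (hA : IsIsolating (sierpinskiGraph (⊤ : SimpleGraph α) (k + 2)) A) :
    (card α - 1) * card α ^ k ≤ A.ncard := by
  classical
  obtain ⟨s, rfl⟩ := A.toFinite.exists_finset_coe
  rw [Set.ncard_coe_finset,
    card_eq_sum_card_fiberwise (f := fun w => Fin.init (Fin.init w)) (t := univ) (by simp)]
  calc (card α - 1) * card α ^ k = ∑ _p : Fin k → α, (card α - 1) := by simp [mul_comm]
    _ ≤ _ := sum_le_sum fun p _ => card_sub_one_le_card_filter_init_init hα hA p

def penultimateIsolatingSet (α : Type*) [Fintype α] [DecidableEq α] (k : ℕ) (x : α) :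
    Finset (Fin (k + 2) → α) :=
  (univ ×ˢ univ.erase x).image fun pc : (Fin k → α) × α => Fin.snoc (Fin.snoc pc.1 pc.2) x

theorem card_penultimateIsolatingSet (x : α) :
    #(penultimateIsolatingSet α k x) = (card α - 1) * card α ^ k := by
  rw [penultimateIsolatingSet,
    card_image_of_injective _ fun pc pc' h => by simpa [Prod.ext_iff] using h]
  simp [card_erase_of_mem, mul_comm]

theorem snoc_snoc_mem_closedNbhd_penultimateIsolatingSet (x : α) (p : Fin k → α) (c : α)
    {y : α} (hy : y ≠ x) :
    Fin.snoc (Fin.snoc p c) y ∈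
      closedNbhd (sierpinskiGraph (⊤ : SimpleGraph α) (k + 2))
        ↑(penultimateIsolatingSet α k x) := by
  have hmem : ∀ c', c' ≠ x → Fin.snoc (Fin.snoc p c') x ∈ penultimateIsolatingSet α k x :=
    fun c' hc' => mem_image.2 ⟨(p, c'), by simpa using hc', rfl⟩
  right
  by_cases hc : c = x
  · subst hc
    exact ⟨_, hmem y hy, sierpinskiGraph.adj_snoc_snoc_swap p hy⟩
  · exact ⟨_, hmem c hc, sierpinskiGraph.adj_snoc _ hy.symm⟩

theorem isIsolating_penultimateIsolatingSet (x : α) :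
    IsIsolating (sierpinskiGraph (⊤ : SimpleGraph α) (k + 2)) ↑(penultimateIsolatingSet α k x) := by
  have hlast : ∀ w ∉ closedNbhd (sierpinskiGraph (⊤ : SimpleGraph α) (k + 2))
      ↑(penultimateIsolatingSet α k x), w (Fin.last (k + 1)) = x := by
    intro w hw
    by_contra hwx
    have := snoc_snoc_mem_closedNbhd_penultimateIsolatingSet x (Fin.init (Fin.init w))
      (Fin.init w (Fin.last k)) hwx
    rw [Fin.snoc_init_self, Fin.snoc_init_self] at this
    exact hw this
  intro u hu v hv huv
  exact sierpinskiGraph.last_ne_of_adj huv ((hlast u hu).trans (hlast v hv).symm)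

end CompleteGraph

/-- For `t ≥ 2` and `n ≥ 3`, `ι(S_{K_n}^t) = (n−1) · n^{t−2}`. -/
theorem isolation_sierpinski_completeGraph (t n : ℕ) (ht : 2 ≤ t) (hn : 3 ≤ n) :
    isolationNum (sierpinskiGraph (⊤ : SimpleGraph (Fin n)) t) = (n - 1) * n ^ (t - 2) := by
  obtain ⟨k, rfl⟩ : ∃ k, t = k + 2 := ⟨t - 2, by omega⟩
  have x : Fin n := ⟨0, by omega⟩
  rw [Nat.add_sub_cancel]
  refine IsLeast.csInf_eq ⟨⟨_, isIsolating_penultimateIsolatingSet x, ?_⟩, ?_⟩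
  · simpa using card_penultimateIsolatingSet (k := k) x
  · rintro _ ⟨A, hA, rfl⟩
    simpa using card_sub_one_mul_pow_le_ncard (by simpa using hn) hA
end

section
/- For every integer t ≥ 2, ι(S_{C₄}^t) = 3·4^{t−2}, where S_{C₄}^t is the t-th generalized Sierpiński graph over the 4-cycle C₄. -/
/-!
A word of length `m + 2` is a prefix `w` of length `m` followed by a word of length `2`, so
`S_{C₄}^{m+2}` consists of `4^m` copies of `S_{C₄}^2`, and an edge between two different copies
always has two constant suffixes at its ends. Hence vertices of a copy with a non-constant suffix
only see their own copy. In `S_{C₄}^2`, for any two vertices some edge between non-constant words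
has both ends outside their closed neighbourhoods, so an isolating set meets every copy in at
least three vertices.
Conversely, if `c` is the last letter of `w`, the three vertices `cc`, `(c+1)(c+2)`, `(c+3)(c+2)`
of copy `w` leave an independent set uncovered whose only constant word is `(c+2)(c+2)`; an edge
leaving the copy from it would need the prefix to end in a letter equal or adjacent to `c + 2`.
-/

theorem closedNbhd_mono {V : Type*} {G : SimpleGraph V} {A B : Set V} (h : A ⊆ B) :
    closedNbhd G A ⊆ closedNbhd G B := by
  rintro v (hv | ⟨a, ha, hav⟩)
  exacts [.inl (h hv), .inr ⟨a, h ha, hav⟩]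

theorem isolationNum_eq {V : Type*} {G : SimpleGraph V} {N : ℕ}
    (hex : ∃ A, IsIsolating G A ∧ A.ncard = N) (hle : ∀ A, IsIsolating G A → N ≤ A.ncard) :
    isolationNum G = N :=
  le_antisymm (Nat.sInf_le hex) (le_csInf ⟨N, hex⟩ fun _ ⟨A, hA, hAN⟩ => hAN ▸ hle A hA)

instance {V : Type*} [Fintype V] (G : SimpleGraph V) [DecidableRel G.Adj] (A : Set V)
    [DecidablePred (· ∈ A)] (v : V) : Decidable (v ∈ closedNbhd G A) :=
  inferInstanceAs (Decidable (v ∈ A ∨ ∃ a, a ∈ A ∧ G.Adj a v))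

instance {V : Type*} [Fintype V] [DecidableEq V] (n : ℕ) (s : Fin n → V) :
    Decidable (s ∈ extremeVertices V n) :=
  inferInstanceAs (Decidable (∃ x, s = fun _ => x))

section Sierpinski

variable {V : Type*} {G : SimpleGraph V} {m n : ℕ}

theorem Fin.append_inj {w w' : Fin m → V} {s s' : Fin n → V} :
    Fin.append w s = Fin.append w' s' ↔ w = w' ∧ s = s' :=
  ⟨fun h => Prod.ext_iff.mp ((Fin.appendEquiv m n).injective (a₁ := (w, s)) (a₂ := (w', s')) h),
    fun ⟨hw, hs⟩ => hw ▸ hs ▸ rfl⟩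

theorem Fin.append_right_injective (w : Fin m → V) :
    Function.Injective (Fin.append w : (Fin n → V) → Fin (m + n) → V) := fun _ _ h =>
  (Fin.append_inj.mp h).2

theorem Fin.exists_append_eq (u : Fin (m + n) → V) : ∃ w s, Fin.append w s = u :=
  ⟨_, _, Fin.append_castAdd_natAdd⟩

instance [DecidableEq V] [DecidableRel G.Adj] (t : ℕ) : DecidableRel (sierpinskiGraph G t).Adj :=
  fun u v => inferInstanceAs (Decidable (∃ i : Fin t, (∀ j, j < i → u j = v j) ∧ u i ≠ v i ∧
    G.Adj (u i) (v i) ∧ ∀ j, i < j → u j = v i ∧ v j = u i))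

namespace sierpinskiGraph

theorem adj_append_of_adj {w : Fin m → V} {s s' : Fin n → V}
    (h : (sierpinskiGraph G n).Adj s s') :
    (sierpinskiGraph G (m + n)).Adj (Fin.append w s) (Fin.append w s') := by
  obtain ⟨i, hlt, hne, hadj, hgt⟩ := h
  refine ⟨Fin.natAdd m i, fun j hj => ?_, by simpa using hne, by simpa using hadj, fun j hj => ?_⟩
  · induction j using Fin.addCases with
    | left j => simp
    | right j => simpa using hlt j (by simpa using hj)
  · induction j using Fin.addCases with
    | left j => exact absurd hj (by simp [Fin.lt_def]; omega)
    | right j => simpa using hgt j (by simpa using hj)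

theorem adj_append_cases {w w' : Fin m → V} {s s' : Fin n → V}
    (h : (sierpinskiGraph G (m + n)).Adj (Fin.append w s) (Fin.append w' s')) :
    (w = w' ∧ (sierpinskiGraph G n).Adj s s') ∨
      ∃ x, s = (fun _ => x) ∧ ∃ i, G.Adj (w i) x ∧ ∀ j, i < j → w j = x := by
  obtain ⟨i, hlt, hne, hadj, hgt⟩ := h
  induction i using Fin.addCases with
  | left i =>
    refine .inr ⟨w' i, funext fun k => ?_, i, by simpa using hadj, fun j hj => ?_⟩
    · simpa using (hgt (Fin.natAdd m k) (by simp [Fin.lt_def]; omega)).1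
    · simpa using (hgt (Fin.castAdd n j) (Fin.strictMono_castAdd n hj)).1
  | right i =>
    refine .inl ⟨funext fun j => ?_, i, fun j hj => ?_, by simpa using hne, by simpa using hadj,
      fun j hj => ?_⟩
    · simpa using hlt (Fin.castAdd n j) (by simp [Fin.lt_def]; omega)
    · simpa using hlt (Fin.natAdd m j) (by simpa using hj)
    · simpa using hgt (Fin.natAdd m j) (by simpa using hj)

theorem append_mem_closedNbhd {A : Set (Fin (m + n) → V)} {w : Fin m → V} {s : Fin n → V}
    (h : s ∈ closedNbhd (sierpinskiGraph G n) (Fin.append w ⁻¹' A)) :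
    Fin.append w s ∈ closedNbhd (sierpinskiGraph G (m + n)) A := by
  rcases h with hs | ⟨a, ha, has⟩
  exacts [.inl hs, .inr ⟨_, ha, adj_append_of_adj has⟩]

theorem mem_closedNbhd_of_append_mem {A : Set (Fin (m + n) → V)} {w : Fin m → V}
    {s : Fin n → V} (hs : s ∉ extremeVertices V n)
    (h : Fin.append w s ∈ closedNbhd (sierpinskiGraph G (m + n)) A) :
    s ∈ closedNbhd (sierpinskiGraph G n) (Fin.append w ⁻¹' A) := by
  rcases h with hs' | ⟨a, ha, has⟩
  · exact .inl hs'
  obtain ⟨w', s', rfl⟩ := Fin.exists_append_eq a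
  rcases adj_append_cases has.symm with ⟨rfl, hss'⟩ | ⟨x, rfl, -⟩
  · exact .inr ⟨s', ha, hss'.symm⟩
  · exact absurd ⟨x, rfl⟩ hs

theorem ncard_eq_sum_ncard_preimage_append [Fintype V] (A : Set (Fin (m + n) → V)) :
    A.ncard = ∑ w : Fin m → V, (Fin.append w ⁻¹' A).ncard := by
  classical
  let pre : (Fin (m + n) → V) → Fin m → V := fun u i => u (Fin.castAdd n i)
  rw [Set.ncard_eq_toFinset_card', Finset.card_eq_sum_card_fiberwise
    (f := pre) (t := Finset.univ) fun _ _ => Finset.mem_univ _]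
  refine Finset.sum_congr rfl fun w _ => ?_
  rw [Set.ncard_eq_toFinset_card', ← Finset.card_image_of_injective (Fin.append w ⁻¹' A).toFinset
    (Fin.append_right_injective w)]
  refine congrArg Finset.card (Finset.ext fun u => ?_)
  obtain ⟨w', s, rfl⟩ := Fin.exists_append_eq u
  simp only [Finset.mem_filter, Set.mem_toFinset, Finset.mem_image, Set.mem_preimage,
    Fin.append_left, Fin.append_inj, pre]
  grind

theorem le_ncard_of_isIsolating [Fintype V] {k : ℕ}
    (hk : ∀ B : Set (Fin n → V),
      IndepSet (sierpinskiGraph G n) ((closedNbhd (sierpinskiGraph G n) B)ᶜ \ extremeVertices V n) →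
        k ≤ B.ncard)
    {A : Set (Fin (m + n) → V)} (hA : IsIsolating (sierpinskiGraph G (m + n)) A) :
    Fintype.card V ^ m * k ≤ A.ncard := by
  have copy_le (w : Fin m → V) : k ≤ (Fin.append w ⁻¹' A).ncard := by
    refine hk _ fun s hs s' hs' hss' => ?_
    have uncovered {r : Fin n → V}
        (hr : r ∈ (closedNbhd (sierpinskiGraph G n) (Fin.append w ⁻¹' A))ᶜ \ extremeVertices V n) :
        Fin.append w r ∈ (closedNbhd (sierpinskiGraph G (m + n)) A)ᶜ :=
      fun h => hr.1 (mem_closedNbhd_of_append_mem hr.2 h)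
    exact hA _ (uncovered hs) _ (uncovered hs') (adj_append_of_adj hss')
  calc Fintype.card V ^ m * k = ∑ _w : Fin m → V, k := by simp
    _ ≤ ∑ w, (Fin.append w ⁻¹' A).ncard := Finset.sum_le_sum fun w _ => copy_le w
    _ = A.ncard := (ncard_eq_sum_ncard_preimage_append A).symm

/-- `hext`: a constant word left uncovered in copy `w` has no neighbour in another copy. -/
theorem isIsolating_iUnion_image_append (B : (Fin m → V) → Set (Fin n → V))
    (hB : ∀ w, IsIsolating (sierpinskiGraph G n) (B w))
    (hext : ∀ w x i, (fun _ => x) ∉ closedNbhd (sierpinskiGraph G n) (B w) →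
      G.Adj (w i) x → ∃ j, i < j ∧ w j ≠ x) :
    IsIsolating (sierpinskiGraph G (m + n)) (⋃ w, Fin.append w '' B w) := by
  have preimage_eq (w) : Fin.append w ⁻¹' (⋃ w', Fin.append w' '' B w') = B w := by
    ext s
    simp [Fin.append_inj]
  intro u hu v hv huv
  obtain ⟨w, s, rfl⟩ := Fin.exists_append_eq u
  obtain ⟨w', s', rfl⟩ := Fin.exists_append_eq v
  have hs : s ∉ closedNbhd (sierpinskiGraph G n) (B w) := fun h =>
    hu (append_mem_closedNbhd (by rwa [preimage_eq]))
  have hs' : s' ∉ closedNbhd (sierpinskiGraph G n) (B w') := fun h =>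
    hv (append_mem_closedNbhd (by rwa [preimage_eq]))
  rcases adj_append_cases huv with ⟨rfl, hss'⟩ | ⟨x, rfl, i, hix, hx⟩
  · exact hB w _ hs _ hs' hss'
  · obtain ⟨j, hij, hj⟩ := hext w x i hs hix
    exact hj (hx j hij)

theorem ncard_iUnion_image_append [Fintype V] (B : (Fin m → V) → Set (Fin n → V)) :
    (⋃ w, Fin.append w '' B w).ncard = ∑ w, (B w).ncard := by
  rw [ncard_eq_sum_ncard_preimage_append]
  congr! with w
  ext s
  simp [Fin.append_inj]

end sierpinskiGraph

end Sierpinski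

section CycleFour

open SimpleGraph

namespace sierpinskiGraph

set_option synthInstance.maxSize 256 in
theorem cycleFour_two_exists_adj_notMem_closedNbhd_pair :
    ∀ b b' : Fin 2 → Fin 4, ∃ s s', s ∉ extremeVertices (Fin 4) 2 ∧
      s' ∉ extremeVertices (Fin 4) 2 ∧
      s ∉ closedNbhd (sierpinskiGraph (cycleGraph 4) 2) {b, b'} ∧
      s' ∉ closedNbhd (sierpinskiGraph (cycleGraph 4) 2) {b, b'} ∧
      (sierpinskiGraph (cycleGraph 4) 2).Adj s s' := by
  decide

theorem cycleFour_two_three_le_ncard (B : Set (Fin 2 → Fin 4))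
    (hB : IndepSet (sierpinskiGraph (cycleGraph 4) 2)
      ((closedNbhd (sierpinskiGraph (cycleGraph 4) 2) B)ᶜ \ extremeVertices (Fin 4) 2)) :
    3 ≤ B.ncard := by
  by_contra! hB3
  obtain ⟨P, hBP, -, hP⟩ := Set.exists_subsuperset_card_eq (Set.subset_univ B) (n := 2)
    (by omega) (by simp [Set.ncard_univ])
  obtain ⟨b, b', -, rfl⟩ := Set.ncard_eq_two.mp hP
  obtain ⟨s, s', hs, hs', hsN, hs'N, hss'⟩ := cycleFour_two_exists_adj_notMem_closedNbhd_pair b b'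
  exact hB s ⟨mt (closedNbhd_mono hBP ·) hsN, hs⟩ s' ⟨mt (closedNbhd_mono hBP ·) hs'N, hs'⟩ hss'

end sierpinskiGraph

def cycleFourTriple (c : Fin 4) : Set (Fin 2 → Fin 4) :=
  {![c, c], ![c + 1, c + 2], ![c + 3, c + 2]}

theorem ncard_cycleFourTriple (c : Fin 4) : (cycleFourTriple c).ncard = 3 := by
  refine Set.ncard_eq_three.mpr ⟨_, _, _, ?_, ?_, ?_, rfl⟩ <;> revert c <;> decide

theorem isIsolating_cycleFourTriple :
    ∀ c, IsIsolating (sierpinskiGraph (cycleGraph 4) 2) (cycleFourTriple c) := by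
  unfold IsIsolating IndepSet cycleFourTriple
  decide

theorem eq_add_two_of_notMem_closedNbhd_cycleFourTriple :
    ∀ c x, (fun _ => x) ∉ closedNbhd (sierpinskiGraph (cycleGraph 4) 2) (cycleFourTriple c) →
      x = c + 2 := by
  unfold cycleFourTriple
  decide

/-- The value `0` for the empty prefix is arbitrary: then there is a single copy. -/
def lastLetter {m : ℕ} (w : Fin m → Fin 4) : Fin 4 :=
  if h : m = 0 then 0 else w ⟨m - 1, by omega⟩

def cycleFourCover (m : ℕ) : Set (Fin (m + 2) → Fin 4) :=
  ⋃ w, Fin.append w '' cycleFourTriple (lastLetter w)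

theorem isIsolating_cycleFourCover (m : ℕ) :
    IsIsolating (sierpinskiGraph (cycleGraph 4) (m + 2)) (cycleFourCover m) := by
  refine sierpinskiGraph.isIsolating_iUnion_image_append _
    (fun w => isIsolating_cycleFourTriple _) fun w x i hx hix => ?_
  have hm : m ≠ 0 := Nat.ne_zero_of_lt i.2
  let l : Fin m := ⟨m - 1, by omega⟩
  have hl : lastLetter w = w l := dif_neg hm
  have antipodal : ∀ c : Fin 4, c ≠ c + 2 ∧ ¬(cycleGraph 4).Adj c (c + 2) := by decide
  rw [eq_add_two_of_notMem_closedNbhd_cycleFourTriple _ _ hx, hl] at hix ⊢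
  rcases (show i ≤ l from Fin.le_def.mpr (by simp only [l]; omega)).lt_or_eq with hil | rfl
  · exact ⟨l, hil, (antipodal _).1⟩
  · exact absurd hix (antipodal _).2

theorem ncard_cycleFourCover (m : ℕ) : (cycleFourCover m).ncard = 3 * 4 ^ m := by
  simp [cycleFourCover, sierpinskiGraph.ncard_iUnion_image_append, ncard_cycleFourTriple,
    mul_comm]

end CycleFour

/-- For every `t ≥ 2`, `ι(S_{C₄}^t) = 3 · 4^{t−2}`. -/
theorem isolation_sierpinski_cycleFour (t : ℕ) (ht : 2 ≤ t) :
    isolationNum (sierpinskiGraph (SimpleGraph.cycleGraph 4) t) = 3 * 4 ^ (t - 2) := by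
  obtain ⟨m, rfl⟩ := Nat.exists_eq_add_of_le' ht
  rw [Nat.add_sub_cancel]
  refine isolationNum_eq ⟨_, isIsolating_cycleFourCover m, ncard_cycleFourCover m⟩ fun A hA => ?_
  simpa [mul_comm] using
    sierpinskiGraph.le_ncard_of_isIsolating sierpinskiGraph.cycleFour_two_three_le_ncard hA
end

section
/- For all integers n ≥ 3 and t ≥ 2, ι(S_{K_n}² | Ex(S_{K_n}²)) = n − 1; that is, the minimum cardinality of a set A ⊆ V(S_{K_n}²) such that every edge of S_{K_n}² has an endpoint in N[A] ∪ Ex(S_{K_n}²) equals n − 1. -/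
/-- `ι(G|X)`: the minimum size of a set `A` such that the vertices outside
`N[A] ∪ X` form an independent set (vertices of `X` counting as already dominated). -/
noncomputable def isolationNumRel {V : Type*} (G : SimpleGraph V) (X : Set V) : ℕ :=
  sInf {n | ∃ A : Set V, IndepSet G (closedNbhd G A ∪ X)ᶜ ∧ A.ncard = n}

/-!
In `S_{K_n}^2` a vertex `xy` with `x ≠ y` has all its neighbours inside its own copy `x·` of `K_n`,
except for the single vertex `yx`. Hence `n − 1` vertices `xz` (`x ≠ z`) dominate every
non-extreme vertex. Conversely, call a copy `b·` free if `A` meets no vertex of it. Inside a free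
copy at most one non-extreme vertex may stay undominated (the copy is a clique), and every other
`bx` can only be dominated by its partner `xb ∈ A`; so each free copy forces `n − 2` vertices of
`A` with last letter `b`. If `|A| ≤ n − 2`, at least two copies are free, giving
`|A| ≥ 2(n − 2) > n − 2` for `n ≥ 3`.
-/

open SimpleGraph

def IsIsolatingRel {V : Type*} (G : SimpleGraph V) (X A : Set V) : Prop :=
  IndepSet G (closedNbhd G A ∪ X)ᶜ

section IsolationNumRel

variable {V : Type*} {G : SimpleGraph V} {X : Set V}

theorem isolationNumRel_le_ncard {A : Set V} (hA : IsIsolatingRel G X A) :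
    isolationNumRel G X ≤ A.ncard :=
  Nat.sInf_le ⟨A, hA, rfl⟩

theorem le_isolationNumRel {m : ℕ} (h : ∀ A, IsIsolatingRel G X A → m ≤ A.ncard) :
    m ≤ isolationNumRel G X := by
  refine le_csInf ⟨_, Set.univ, ?_, rfl⟩ ?_
  · intro u hu
    exact absurd (Or.inl (Or.inl trivial)) hu
  · rintro _ ⟨A, hA, rfl⟩
    exact h A hA

end IsolationNumRel

section SierpinskiTwo

variable {V : Type*}

theorem sierpinskiGraph_two_adj {G : SimpleGraph V} {u v : Fin 2 → V} :
    (sierpinskiGraph G 2).Adj u v ↔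
      (u 0 = v 0 ∧ G.Adj (u 1) (v 1)) ∨ (G.Adj (u 0) (v 0) ∧ u 1 = v 0 ∧ v 1 = u 0) := by
  constructor
  · rintro ⟨i, hlt, -, hadj, hgt⟩
    fin_cases i
    · exact Or.inr ⟨hadj, hgt 1 Fin.zero_lt_one⟩
    · exact Or.inl ⟨hlt 0 Fin.zero_lt_one, hadj⟩
  · rintro (⟨h0, hadj⟩ | ⟨hadj, h1⟩)
    · refine ⟨1, fun j hj => ?_, hadj.ne, hadj, fun j hj => absurd hj (by omega)⟩
      obtain rfl : j = 0 := by omega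
      exact h0
    · refine ⟨0, fun j hj => absurd hj (by omega), hadj.ne, hadj, fun j hj => ?_⟩
      obtain rfl : j = 1 := by omega
      exact h1

theorem mem_extremeVertices_two_iff {w : Fin 2 → V} :
    w ∈ extremeVertices V 2 ↔ w 0 = w 1 := by
  refine ⟨fun ⟨x, hx⟩ => by rw [hx], fun h => ⟨w 0, funext fun i => ?_⟩⟩
  fin_cases i
  · rfl
  · exact h.symm

theorem sierpinskiGraph_two_eq_of_adj {G : SimpleGraph V} {a : Fin 2 → V} {b x : V}
    (hadj : (sierpinskiGraph G 2).Adj a ![b, x]) (ha : a 0 ≠ b) : a 0 = x ∧ a 1 = b := by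
  rcases sierpinskiGraph_two_adj.mp hadj with ⟨h0, -⟩ | ⟨-, h1, h0⟩
  · exact absurd h0 ha
  · exact ⟨h0.symm, h1⟩

theorem closedNbhd_union_extremeVertices_eq_univ (z : V) :
    closedNbhd (sierpinskiGraph ⊤ 2) ((fun x => ![x, z]) '' {z}ᶜ) ∪ extremeVertices V 2 =
      Set.univ := by
  refine Set.eq_univ_of_forall fun w => ?_
  by_cases h1 : w 1 = z
  · by_cases h0 : w 0 = z
    · exact Or.inr (mem_extremeVertices_two_iff.mpr (h0.trans h1.symm))
    · refine Or.inl (Or.inl ⟨w 0, h0, ?_⟩)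
      rw [← h1]
      exact FinVec.etaExpand_eq w
  · refine Or.inl (Or.inr ?_)
    by_cases h0 : w 0 = z
    · refine ⟨![w 1, z], ⟨w 1, h1, rfl⟩, sierpinskiGraph_two_adj.mpr (Or.inr ?_)⟩
      simp [h0, h1]
    · refine ⟨![w 0, z], ⟨w 0, h0, rfl⟩, sierpinskiGraph_two_adj.mpr (Or.inl ?_)⟩
      simp [Ne.symm h1]

theorem isolationNumRel_sierpinskiGraph_two_top_le [Finite V] [Nonempty V] :
    isolationNumRel (sierpinskiGraph ⊤ 2) (extremeVertices V 2) ≤ Nat.card V - 1 := by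
  obtain ⟨z⟩ := ‹Nonempty V›
  have hA : IsIsolatingRel (sierpinskiGraph ⊤ 2) (extremeVertices V 2)
      ((fun x => ![x, z]) '' {z}ᶜ) := by
    intro u hu
    exact absurd (closedNbhd_union_extremeVertices_eq_univ z ▸ Set.mem_univ u) hu
  have hinj : Function.Injective fun x : V => ![x, z] := fun x y h => by
    simpa using congrFun h 0
  calc _ ≤ ((fun x => ![x, z]) '' {z}ᶜ).ncard := isolationNumRel_le_ncard hA
    _ = Nat.card V - 1 := by
      rw [Set.ncard_image_of_injective _ hinj, Set.ncard_compl, Set.ncard_singleton]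

theorem undominated_subsingleton_of_isIsolatingRel {A : Set (Fin 2 → V)}
    (hA : IsIsolatingRel (sierpinskiGraph ⊤ 2) (extremeVertices V 2) A) (b : V) :
    {x | x ≠ b ∧ ![b, x] ∉ closedNbhd (sierpinskiGraph ⊤ 2) A}.Subsingleton := by
  intro x hx y hy
  by_contra hxy
  have hout {x : V} (hx : x ≠ b ∧ ![b, x] ∉ closedNbhd (sierpinskiGraph ⊤ 2) A) :
      ![b, x] ∈ (closedNbhd (sierpinskiGraph ⊤ 2) A ∪ extremeVertices V 2)ᶜ := by
    rintro (hdom | hext)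
    · exact hx.2 hdom
    · exact hx.1 (mem_extremeVertices_two_iff.mp hext).symm
  exact hA _ (hout hx) _ (hout hy) (sierpinskiGraph_two_adj.mpr (Or.inl (by simpa using hxy)))

variable [Finite V] {A : Set (Fin 2 → V)}

theorem card_sub_two_le_ncard_of_isIsolatingRel
    (hA : IsIsolatingRel (sierpinskiGraph ⊤ 2) (extremeVertices V 2) A) {b : V}
    (hb : b ∉ (· 0) '' A) : Nat.card V - 2 ≤ (A ∩ {w | w 1 = b}).ncard := by
  have hcover : {b}ᶜ ⊆ {x | x ≠ b ∧ ![b, x] ∉ closedNbhd (sierpinskiGraph ⊤ 2) A} ∪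
      (· 0) '' (A ∩ {w | w 1 = b}) := by
    intro x hx
    by_cases hdom : ![b, x] ∈ closedNbhd (sierpinskiGraph ⊤ 2) A
    · rcases hdom with hmem | ⟨a, ha, hadj⟩
      · exact absurd ⟨_, hmem, rfl⟩ hb
      · obtain ⟨h0, h1⟩ := sierpinskiGraph_two_eq_of_adj hadj fun h => hb ⟨a, ha, h⟩
        exact Or.inr ⟨a, ⟨ha, h1⟩, h0⟩
    · exact Or.inl ⟨hx, hdom⟩
  have hcompl : ({b}ᶜ : Set V).ncard = Nat.card V - 1 := by
    rw [Set.ncard_compl, Set.ncard_singleton]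
  have hundom := Set.ncard_le_one_iff_subsingleton.mpr
    (undominated_subsingleton_of_isIsolatingRel hA b)
  have := (Set.ncard_le_ncard hcover).trans (Set.ncard_union_le _ _)
  have := Set.ncard_image_le (f := (· 0)) (s := A ∩ {w | w 1 = b})
  omega

theorem card_sub_one_le_ncard_of_isIsolatingRel (hV : 3 ≤ Nat.card V)
    (hA : IsIsolatingRel (sierpinskiGraph ⊤ 2) (extremeVertices V 2) A) :
    Nat.card V - 1 ≤ A.ncard := by
  by_contra! hlt
  have hfree : 1 < ((· 0) '' A)ᶜ.ncard := by
    have := Set.ncard_add_ncard_compl ((· 0) '' A)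
    have := Set.ncard_image_le (f := (· 0)) (s := A)
    omega
  obtain ⟨b₁, b₂, hb₁, hb₂, hne⟩ := (Set.one_lt_ncard_iff).mp hfree
  have hdisj : Disjoint (A ∩ {w | w 1 = b₁}) (A ∩ {w | w 1 = b₂}) :=
    Set.disjoint_left.mpr fun w h₁ h₂ => hne (h₁.2.symm.trans h₂.2)
  have := Set.ncard_union_eq hdisj
  have := Set.ncard_le_ncard (Set.union_subset Set.inter_subset_left Set.inter_subset_left :
    A ∩ {w | w 1 = b₁} ∪ A ∩ {w | w 1 = b₂} ⊆ A)
  have := card_sub_two_le_ncard_of_isIsolatingRel hA hb₁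
  have := card_sub_two_le_ncard_of_isIsolatingRel hA hb₂
  omega

end SierpinskiTwo

theorem isolationRel_sierpinski_two_completeGraph_general (n : ℕ) (hn : 3 ≤ n) :
    isolationNumRel (sierpinskiGraph (⊤ : SimpleGraph (Fin n)) 2)
      (extremeVertices (Fin n) 2) = n - 1 := by
  have : Nonempty (Fin n) := ⟨⟨0, by omega⟩⟩
  apply le_antisymm
  · simpa only [Nat.card_fin] using isolationNumRel_sierpinskiGraph_two_top_le (V := Fin n)
  · refine le_isolationNumRel fun A hA => ?_
    simpa only [Nat.card_fin] using
      card_sub_one_le_ncard_of_isIsolatingRel (by rwa [Nat.card_fin]) hA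

/-- For all `n ≥ 3` and `t ≥ 2`, `ι(S_{K_n}² | Ex(S_{K_n}²)) = n − 1`. -/
theorem isolationRel_sierpinski_two_completeGraph (n t : ℕ) (hn : 3 ≤ n) (ht : 2 ≤ t) :
    isolationNumRel (sierpinskiGraph (⊤ : SimpleGraph (Fin n)) 2)
      (extremeVertices (Fin n) 2) = n - 1 :=
  isolationRel_sierpinski_two_completeGraph_general n hn
end

section
/- For every integer n ≥ 3, ι(S(K_{1,n}) □ K₂) = n, where S(K_{1,n}) is the graph obtained from the star K_{1,n} by subdividing each edge exactly once. -/
/-- The subdivision `S(K_{1,n})` of the star: the center `none` is adjacent to each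
subdivision vertex `some (i, false)`, which in turn is adjacent to the leaf `some (i, true)`. -/
def subdividedStar (n : ℕ) : SimpleGraph (Option (Fin n × Bool)) :=
  SimpleGraph.fromRel fun x y =>
    (x = none ∧ ∃ i : Fin n, y = some (i, false)) ∨
    (∃ i : Fin n, x = some (i, false) ∧ y = some (i, true))

lemma subStar_adj_iff {n : ℕ} {x y : Option (Fin n × Bool)} :
    (subdividedStar n).Adj x y ↔ x ≠ y ∧
      ((x = none ∧ ∃ i : Fin n, y = some (i, false)) ∨
       (∃ i : Fin n, x = some (i, false) ∧ y = some (i, true)) ∨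
       (y = none ∧ ∃ i : Fin n, x = some (i, false)) ∨
       (∃ i : Fin n, y = some (i, false) ∧ x = some (i, true))) := by
  simp only [subdividedStar, SimpleGraph.fromRel_adj]
  constructor
  · rintro ⟨hne, (⟨hx, i, hy⟩ | ⟨i, hx, hy⟩) | (⟨hy, i, hx⟩ | ⟨i, hy, hx⟩)⟩
    · exact ⟨hne, Or.inl ⟨hx, i, hy⟩⟩
    · exact ⟨hne, Or.inr (Or.inl ⟨i, hx, hy⟩)⟩
    · exact ⟨hne, Or.inr (Or.inr (Or.inl ⟨hy, i, hx⟩))⟩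
    · exact ⟨hne, Or.inr (Or.inr (Or.inr ⟨i, hy, hx⟩))⟩
  · rintro ⟨hne, h | h | h | h⟩
    · exact ⟨hne, Or.inl (Or.inl h)⟩
    · exact ⟨hne, Or.inl (Or.inr h)⟩
    · exact ⟨hne, Or.inr (Or.inl h)⟩
    · exact ⟨hne, Or.inr (Or.inr h)⟩

/-- Vertices that are neither subdivision vertices are never adjacent in `S(K_{1,n})`. -/
lemma subStar_no_adj {n : ℕ} {x y : Option (Fin n × Bool)}
    (hx : ∀ i : Fin n, x ≠ some (i, false)) (hy : ∀ i : Fin n, y ≠ some (i, false)) :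
    ¬ (subdividedStar n).Adj x y := by
  rw [subStar_adj_iff]
  rintro ⟨-, (⟨-, i, h⟩ | ⟨i, h, -⟩ | ⟨-, i, h⟩ | ⟨i, h, -⟩)⟩
  · exact hy i h
  · exact hx i h
  · exact hx i h
  · exact hy i h

/-- Any neighbor of a leaf `(some (i, true), t)` in the prism lies on spoke `i`. -/
lemma adj_leaf {n : ℕ} {a : Option (Fin n × Bool) × Fin 2} {i : Fin n} {t : Fin 2}
    (h : ((subdividedStar n).boxProd (⊤ : SimpleGraph (Fin 2))).Adj a (some (i, true), t)) :
    ∃ b : Bool, a.1 = some (i, b) := by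
  rcases h with ⟨h1, -⟩ | ⟨-, h1⟩
  · rw [subStar_adj_iff] at h1
    rcases h1 with ⟨-, (⟨-, j, h⟩ | ⟨j, hx, h⟩ | ⟨h, -⟩ | ⟨j, h, -⟩)⟩
    · simp at h
    · simp only [Option.some.injEq, Prod.mk.injEq] at h
      exact ⟨false, by rw [hx, h.1]⟩
    · simp at h
    · simp at h
  · exact ⟨true, h1⟩

lemma fin2_cases (t : Fin 2) : t = 0 ∨ t = 1 := by fin_cases t <;> simp

/-- For every `n ≥ 3`, `ι(S(K_{1,n}) □ K₂) = n`. -/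
theorem isolation_subdividedStar_prism (n : ℕ) (hn : 3 ≤ n) :
    isolationNum ((subdividedStar n).boxProd (⊤ : SimpleGraph (Fin 2))) = n := by
  set G := (subdividedStar n).boxProd (⊤ : SimpleGraph (Fin 2)) with hG
  have hnpos : 0 < n := by omega
  -- the upper-bound witness: subdivision vertices in copy 0
  set f : Fin n → Option (Fin n × Bool) × Fin 2 :=
    fun i => (some (i, false), 0) with hf
  set A₀ : Set (Option (Fin n × Bool) × Fin 2) := Set.range f with hA₀
  have hfinj : Function.Injective f := by
    intro i j h
    simpa [hf] using h
  have hcard : A₀.ncard = n := by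
    rw [hA₀, ← Set.image_univ, Set.ncard_image_of_injective _ hfinj, Set.ncard_univ,
      Nat.card_eq_fintype_card, Fintype.card_fin]
  -- membership facts in N[A₀]
  have hA0 : ∀ i : Fin n, f i ∈ A₀ := fun i => ⟨i, rfl⟩
  have hmem : ∀ v : Option (Fin n × Bool) × Fin 2,
      v ∉ closedNbhd G A₀ → v.2 = 1 ∧ ∀ i : Fin n, v.1 ≠ some (i, false) := by
    rintro ⟨x, t⟩ hv
    simp only [closedNbhd, Set.mem_setOf_eq, not_or, not_exists, not_and] at hv
    obtain ⟨hv1, hv2⟩ := hv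
    constructor
    · rcases fin2_cases t with h2 | h2
      · exfalso
        subst h2
        rcases x with _ | ⟨i, b⟩
        · exact hv2 (f ⟨0, hnpos⟩) (hA0 _)
            (Or.inl ⟨subStar_adj_iff.mpr ⟨by simp [hf], Or.inr (Or.inr (Or.inl
              ⟨rfl, ⟨0, hnpos⟩, rfl⟩))⟩, rfl⟩)
        · cases b
          · exact hv1 ⟨i, rfl⟩
          · exact hv2 (f i) (hA0 i)
              (Or.inl ⟨subStar_adj_iff.mpr ⟨by simp [hf], Or.inr (Or.inl ⟨i, rfl, rfl⟩)⟩, rfl⟩)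
      · exact h2
    · intro i hi
      subst hi
      rcases fin2_cases t with h2 | h2
      · exact hv1 ⟨i, by simp [hf, h2]⟩
      · subst h2
        exact hv2 (f i) (hA0 i) (Or.inr ⟨by simp [hf], rfl⟩)
  have hiso : IsIsolating G A₀ := by
    intro u hu v hv hadj
    obtain ⟨hu2, hu1⟩ := hmem u hu
    obtain ⟨hv2, hv1⟩ := hmem v hv
    rcases hadj with ⟨h1, -⟩ | ⟨htop, -⟩
    · exact subStar_no_adj hu1 hv1 h1
    · rw [hu2, hv2] at htop
      exact htop.ne rfl
  -- lower bound
  have hlow : ∀ A : Set (Option (Fin n × Bool) × Fin 2), IsIsolating G A → n ≤ A.ncard := by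
    intro A hA
    have key : ∀ i : Fin n, ∃ a, a ∈ A ∧ ∃ b : Bool, a.1 = some (i, b) := by
      intro i
      by_contra hcon
      push_neg at hcon
      have hnot : ∀ t : Fin 2, ((some (i, true), t) : Option (Fin n × Bool) × Fin 2)
          ∉ closedNbhd G A := by
        intro t hmemt
        rcases hmemt with h | ⟨a, ha, hadj⟩
        · exact hcon _ h true rfl
        · obtain ⟨b, hb⟩ := adj_leaf hadj
          exact hcon a ha b hb
      have hadj01 : G.Adj (some (i, true), 0) (some (i, true), 1) :=
        Or.inr ⟨by simp, rfl⟩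
      exact hA _ (hnot 0) _ (hnot 1) hadj01
    choose g hgA hgb using key
    have hginj : Function.Injective g := by
      intro i j h
      obtain ⟨bi, hbi⟩ := hgb i
      obtain ⟨bj, hbj⟩ := hgb j
      rw [h, hbj] at hbi
      simpa using congrArg (fun o => Option.map Prod.fst o) hbi.symm
    have hsub : Set.range g ⊆ A := by
      rintro _ ⟨i, rfl⟩
      exact hgA i
    calc n = (Set.range g).ncard := by
            rw [← Set.image_univ, Set.ncard_image_of_injective _ hginj, Set.ncard_univ,
              Nat.card_eq_fintype_card, Fintype.card_fin]
      _ ≤ A.ncard := Set.ncard_le_ncard hsub A.toFinite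
  refine le_antisymm (Nat.sInf_le ⟨A₀, hiso, hcard⟩) (le_csInf ⟨n, A₀, hiso, hcard⟩ ?_)
  rintro m ⟨A, hA, rfl⟩
  exact hlow A hA
end
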